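/- arXiv:2011.07977 — 2 statements merged into one kernel-verified Lean document; each statement's English description precedes it below -/
import Mathlib

section
/- In the A-PQM algorithm, if the processing branch has amplitude √γ_k before step k, then applying the controlled U₃^(x_k, γ_k) produces a stored branch with amplitude exactly x_k and a processing branch with amplitude √(γ_k − |x_k|²) = √γ_{k+1}; consequently, by induction, after M steps the state is Σ_{k<M} x_k |p_k⟩ with processing amplitude √γ_M = 0. -/
open Matrix

/-- The gate `U₃^(x,γ)` of A-PQM. -/
noncomputable def u3Gate (x : ℂ) (γ : ℝ) : Matrix (Fin 2) (Fin 2) ℂ :=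
  !![(Real.sqrt ((γ - ‖x‖ ^ 2) / γ) : ℂ), x / (Real.sqrt γ : ℂ);
     -(starRingEnd ℂ x) / (Real.sqrt γ : ℂ), (Real.sqrt ((γ - ‖x‖ ^ 2) / γ) : ℂ)]

theorem u3Gate_mulVec {x : ℂ} {γ : ℝ} (hx : ‖x‖ ^ 2 ≤ γ) :
    u3Gate x γ *ᵥ ![0, (Real.sqrt γ : ℂ)] = ![x, (Real.sqrt (γ - ‖x‖ ^ 2) : ℂ)] := by
  simp only [u3Gate, mulVec_fin_two, of_apply, cons_val_zero, cons_val_one, mul_zero, zero_add]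
  rcases (hx.trans' (sq_nonneg ‖x‖)).eq_or_lt with hγ | hγ
  · -- `x / √0 * √0 = 0` in Lean, which matches only because `‖x‖² ≤ 0` forces `x = 0`.
    have hx0 : x = 0 := by simpa [← hγ] using hx
    simp [hx0, ← hγ]
  · have hsqrt : (Real.sqrt γ : ℂ) ≠ 0 := by exact_mod_cast (Real.sqrt_pos.mpr hγ).ne'
    rw [div_mul_cancel₀ _ hsqrt, ← Complex.ofReal_mul, ← Real.sqrt_mul' _ hγ.le,
      div_mul_cancel₀ _ hγ.ne']

theorem apqm_split_action (M : ℕ) (x : ℕ → ℂ) (γ : ℕ → ℝ)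
    (hγ0 : γ 0 = 1) (hγ : ∀ k, γ (k + 1) = γ k - ‖x k‖ ^ 2)
    (hle : ∀ k < M, ‖x k‖ ^ 2 ≤ γ k)
    (hx : ∑ k ∈ Finset.range M, ‖x k‖ ^ 2 = 1) :
    (∀ k < M,
      (!![(Real.sqrt ((γ k - ‖x k‖ ^ 2) / γ k) : ℂ), x k / (Real.sqrt (γ k) : ℂ);
          -(starRingEnd ℂ (x k)) / (Real.sqrt (γ k) : ℂ),
          (Real.sqrt ((γ k - ‖x k‖ ^ 2) / γ k) : ℂ)]).mulVec
        ![0, (Real.sqrt (γ k) : ℂ)] =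
        ![x k, (Real.sqrt (γ (k + 1)) : ℂ)]) ∧
    Real.sqrt (γ M) = 0 := by
  refine ⟨fun k hk => by rw [hγ k]; exact u3Gate_mulVec (hle k hk), ?_⟩
  have hγM : γ M = 0 := by
    have htelescope := Finset.sum_range_sub' γ M
    simp only [hγ, sub_sub_cancel, hx, hγ0] at htelescope
    linarith
  simp [hγM]
end

section
/- If x = √a + i√b with a, b ≥ 0 and a + b ≤ γ for γ > 0, then the parameters θ = 2·arccos(√((γ−a−b)/γ)), λ with cos λ = −√a/(√γ sin(θ/2)) and sin λ = −√b/(√γ sin(θ/2)) (when sin(θ/2) ≠ 0), and φ = −λ make the general single-qubit unitary U₃(θ,φ,λ) = [[cos(θ/2), −e^{iλ} sin(θ/2)], [e^{iφ} sin(θ/2), e^{i(λ+φ)} cos(θ/2)]] equal to U₃^(x,γ) = [[√((γ−|x|²)/γ), x/√γ], [−x̄/√γ, √((γ−|x|²)/γ)]]. -/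
/-! The conditions on `λ` say exactly that `e^{iλ} · √γ sin(θ/2) = -x`; conjugating gives
`e^{iφ} · √γ sin(θ/2) = -x̄`, which yields the off-diagonal entries. The diagonal ones are
`cos (arccos s) = s` for `s = √((γ - |x|²)/γ) ∈ [0, 1]`, and `e^{i(λ+φ)} = 1`. -/

open Complex

lemma exp_mul_I_mul_ofReal_of_cos_of_sin {l m u v : ℝ} (hm : m ≠ 0)
    (hcos : Real.cos l = -u / m) (hsin : Real.sin l = -v / m) :
    exp (l * I) * m = -(u + I * v) := by
  rw [exp_mul_I, ← ofReal_cos, ← ofReal_sin, hcos, hsin]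
  have hm' : (m : ℂ) ≠ 0 := by exact_mod_cast hm
  push_cast
  field_simp
  ring

lemma exp_neg_mul_I_mul_ofReal_of_cos_of_sin {l m u v : ℝ} (hm : m ≠ 0)
    (hcos : Real.cos l = -u / m) (hsin : Real.sin l = -v / m) :
    exp (-l * I) * m = -starRingEnd ℂ (u + I * v) := by
  have h := congrArg (starRingEnd ℂ) (exp_mul_I_mul_ofReal_of_cos_of_sin hm hcos hsin)
  rwa [map_mul, ← exp_conj, map_mul, conj_ofReal, conj_I, conj_ofReal, map_neg, mul_neg,
    ← neg_mul] at h

lemma Real.cos_arccos_sqrt {t : ℝ} (ht : t ≤ 1) :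
    Real.cos (Real.arccos (Real.sqrt t)) = Real.sqrt t :=
  Real.cos_arccos (by linarith [Real.sqrt_nonneg t]) (Real.sqrt_le_one.mpr ht)

theorem U3_general_param_general (a b γ : ℝ) (ha : 0 ≤ a) (hb : 0 ≤ b) (hγ : 0 < γ)
    (x : ℂ) (hx : x = (Real.sqrt a : ℂ) + Complex.I * (Real.sqrt b : ℂ))
    (θ : ℝ) (hθ : θ = 2 * Real.arccos (Real.sqrt ((γ - (a + b)) / γ)))
    (hs : Real.sin (θ / 2) ≠ 0)
    (l : ℝ) (hcosl : Real.cos l = -Real.sqrt a / (Real.sqrt γ * Real.sin (θ / 2)))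
    (hsinl : Real.sin l = -Real.sqrt b / (Real.sqrt γ * Real.sin (θ / 2)))
    (φ : ℝ) (hφ : φ = -l) :
    !![(Real.cos (θ / 2) : ℂ), -Complex.exp (l * Complex.I) * (Real.sin (θ / 2) : ℂ);
       Complex.exp (φ * Complex.I) * (Real.sin (θ / 2) : ℂ),
       Complex.exp ((l + φ) * Complex.I) * (Real.cos (θ / 2) : ℂ)] =
    !![(Real.sqrt ((γ - (a + b)) / γ) : ℂ), x / (Real.sqrt γ : ℂ);
       -(starRingEnd ℂ x) / (Real.sqrt γ : ℂ), (Real.sqrt ((γ - (a + b)) / γ) : ℂ)] := by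
  have hγ' : (Real.sqrt γ : ℂ) ≠ 0 := by exact_mod_cast (Real.sqrt_pos.mpr hγ).ne'
  have hm : Real.sqrt γ * Real.sin (θ / 2) ≠ 0 := mul_ne_zero (by exact_mod_cast hγ') hs
  have hcos : Real.cos (θ / 2) = Real.sqrt ((γ - (a + b)) / γ) := by
    have hle : (γ - (a + b)) / γ ≤ 1 := by rw [div_le_one hγ]; linarith
    rw [hθ, mul_div_cancel_left₀ _ two_ne_zero, Real.cos_arccos_sqrt hle]
  have hup := exp_mul_I_mul_ofReal_of_cos_of_sin hm hcosl hsinl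
  have hdown := exp_neg_mul_I_mul_ofReal_of_cos_of_sin hm hcosl hsinl
  rw [← hx] at hup hdown
  rw [← ofReal_neg, ← hφ] at hdown
  rw [ofReal_mul] at hup hdown
  ext i j
  fin_cases i <;> fin_cases j <;>
    simp only [Matrix.of_apply, Matrix.cons_val', Matrix.cons_val_zero, Matrix.cons_val_one,
      Matrix.empty_val', Matrix.cons_val_fin_one, Fin.zero_eta, Fin.mk_one]
  · rw [hcos]
  · rw [eq_div_iff hγ']
    linear_combination -hup
  · rw [eq_div_iff hγ']
    linear_combination hdown
  · rw [hφ, ofReal_neg, add_neg_cancel, zero_mul, exp_zero, one_mul, hcos]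

theorem U3_general_param (a b γ : ℝ) (ha : 0 ≤ a) (hb : 0 ≤ b) (hγ : 0 < γ)
    (hab : a + b ≤ γ) (x : ℂ) (hx : x = (Real.sqrt a : ℂ) + Complex.I * (Real.sqrt b : ℂ))
    (θ : ℝ) (hθ : θ = 2 * Real.arccos (Real.sqrt ((γ - (a + b)) / γ)))
    (hs : Real.sin (θ / 2) ≠ 0)
    (l : ℝ) (hcosl : Real.cos l = -Real.sqrt a / (Real.sqrt γ * Real.sin (θ / 2)))
    (hsinl : Real.sin l = -Real.sqrt b / (Real.sqrt γ * Real.sin (θ / 2)))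
    (φ : ℝ) (hφ : φ = -l) :
    !![(Real.cos (θ / 2) : ℂ), -Complex.exp (l * Complex.I) * (Real.sin (θ / 2) : ℂ);
       Complex.exp (φ * Complex.I) * (Real.sin (θ / 2) : ℂ),
       Complex.exp ((l + φ) * Complex.I) * (Real.cos (θ / 2) : ℂ)] =
    !![(Real.sqrt ((γ - (a + b)) / γ) : ℂ), x / (Real.sqrt γ : ℂ);
       -(starRingEnd ℂ x) / (Real.sqrt γ : ℂ), (Real.sqrt ((γ - (a + b)) / γ) : ℂ)] :=
  U3_general_param_general a b γ ha hb hγ x hx θ hθ hs l hcosl hsinl φ hφ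
end
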